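/- Let q be a rational prime, let K be a number field containing a primitive q-th root of unity, and let x, d, a ∈ K and a prime 𝔮_K of K satisfy the hypotheses: 𝔮_K divides q; a is not a q-th power in K and 𝔮_K has exactly one prime above it in K(∜a); ord_{𝔮_K}(x) < 0; ord_{𝔮_K}(d) is not divisible by q; ord_{𝔮_K}(d) ≤ −3·ord_{𝔮_K}(q); ord_{𝔮_K}(a) = 0; q·ord_{𝔮_K}(x) < (q−1)·ord_{𝔮_K}(d); and let F = K(α, β, γ) with α^q = 1 + d⁻¹, β^q = 1 + (dx^q + d^q)⁻¹, γ^q = 1 + (a + a⁻¹)d⁻¹. Then for every prime 𝔞_F of F with ord_{𝔞_F}(d) ≥ 0 and ord_{𝔞_F}(x) ≥ 0, all three of ord_{𝔞_F}(d), ord_{𝔞_F}(a), and ord_{𝔞_F}(dx^q + d^q) are divisible by q. -/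

import Mathlib

/-!
If `ord t < 0` then `1 + t` has the same order as `t`, so when `1 + t` is a `q`-th power,
`q ∣ ord t`. Apply this to `t = d⁻¹` and `t = (d x^q + d^q)⁻¹`, which have negative order
wherever `d`, resp. `d x^q + d^q` (integral where `d` and `x` are), has positive order; and to
`t = (a + a⁻¹) d⁻¹`, whose order is `-|ord a| - ord d < 0` as soon as `ord a ≠ 0`.
-/

open IsDedekindDomain NumberField

open scoped Classical in
/-- The `v`-adic order (additive valuation) of a nonzero element `x` of a number field `K`,
with junk value `0` at `x = 0`. -/
noncomputable def ordv {K : Type*} [Field K] [NumberField K]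
    (v : HeightOneSpectrum (𝓞 K)) (x : K) : ℤ :=
  if h : x = 0 then 0
  else - Multiplicative.toAdd (WithZero.unzero ((v.valuation K).ne_zero_iff.mpr h))

/-- The prime `v` of `K` has exactly one prime above it in `K(∜a)`, i.e. in any extension of
`K` generated by a root of `X^q - a`. -/
def DoesNotSplitInQthRootExt (q : ℕ) {K : Type*} [Field K] [NumberField K] (a : K)
    (v : HeightOneSpectrum (𝓞 K)) : Prop :=
  ∀ (Ka : Type*) [Field Ka] [NumberField Ka] [Algebra K Ka] (δ : Ka),
    δ ^ q = algebraMap K Ka a → IntermediateField.adjoin K ({δ} : Set Ka) = ⊤ →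
      ∃! w : HeightOneSpectrum (𝓞 Ka),
        w.asIdeal.comap (algebraMap (𝓞 K) (𝓞 Ka)) = v.asIdeal

open WithZero

section

variable {K : Type*} [Field K] [NumberField K] (v : HeightOneSpectrum (𝓞 K))

lemma ordv_eq_neg_log_valuation (x : K) : ordv v x = -log (v.valuation K x) := by
  unfold ordv
  split_ifs with hx
  · simp [hx]
  · rw [toAdd_unzero_eq_log]

@[simp]
lemma ordv_zero : ordv v (0 : K) = 0 := by
  simp [ordv_eq_neg_log_valuation]

@[simp]
lemma ordv_one : ordv v (1 : K) = 0 := by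
  simp [ordv_eq_neg_log_valuation]

lemma ordv_pow (x : K) (n : ℕ) : ordv v (x ^ n) = n * ordv v x := by
  simp [ordv_eq_neg_log_valuation]

lemma ordv_pow_nonneg {x : K} (hx : 0 ≤ ordv v x) (n : ℕ) : 0 ≤ ordv v (x ^ n) := by
  rw [ordv_pow]
  positivity

lemma ordv_inv (x : K) : ordv v x⁻¹ = -ordv v x := by
  simp [ordv_eq_neg_log_valuation]

lemma ordv_mul {x y : K} (hx : x ≠ 0) (hy : y ≠ 0) :
    ordv v (x * y) = ordv v x + ordv v y := by
  simp only [ordv_eq_neg_log_valuation, map_mul]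
  rw [log_mul (by simpa) (by simpa), neg_add]

lemma ordv_lt_ordv_iff {x y : K} (hx : x ≠ 0) (hy : y ≠ 0) :
    ordv v x < ordv v y ↔ v.valuation K y < v.valuation K x := by
  simp [ordv_eq_neg_log_valuation, hx, hy]

lemma ordv_nonneg_iff (x : K) : 0 ≤ ordv v x ↔ v.valuation K x ≤ 1 := by
  rcases eq_or_ne x 0 with rfl | hx
  · simp
  · rw [ordv_eq_neg_log_valuation, neg_nonneg, log_le_iff_le_exp (by simpa), exp_zero]

lemma ordv_mul_nonneg {x y : K} (hx : 0 ≤ ordv v x) (hy : 0 ≤ ordv v y) :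
    0 ≤ ordv v (x * y) := by
  rw [ordv_nonneg_iff] at hx hy ⊢
  rw [map_mul]
  exact mul_le_one' hx hy

lemma ordv_add_nonneg {x y : K} (hx : 0 ≤ ordv v x) (hy : 0 ≤ ordv v y) :
    0 ≤ ordv v (x + y) := by
  rw [ordv_nonneg_iff] at hx hy ⊢
  exact (v.valuation K).map_add_le hx hy

lemma ordv_add_eq_of_lt {x y : K} (hx : x ≠ 0) (h : ordv v x < ordv v y) :
    ordv v (x + y) = ordv v x := by
  rcases eq_or_ne y 0 with rfl | hy
  · rw [add_zero]
  · rw [ordv_eq_neg_log_valuation, ordv_eq_neg_log_valuation,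
      Valuation.map_add_eq_of_lt_left _ ((ordv_lt_ordv_iff v hx hy).mp h)]

lemma ordv_add_inv_eq_neg_abs {x : K} (h : ordv v x ≠ 0) :
    ordv v (x + x⁻¹) = -|ordv v x| := by
  have hx : x ≠ 0 := by rintro rfl; simp at h
  rcases h.lt_or_gt with hneg | hpos
  · rw [ordv_add_eq_of_lt v hx (by rw [ordv_inv]; omega), abs_of_neg hneg, neg_neg]
  · rw [add_comm, ordv_add_eq_of_lt v (inv_ne_zero hx) (by rw [ordv_inv]; omega), ordv_inv,
      abs_of_pos hpos]

lemma dvd_ordv_of_pow_eq_one_add {q : ℕ} {γ t : K} (hγ : γ ^ q = 1 + t) (ht : ordv v t < 0) :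
    (q : ℤ) ∣ ordv v t := by
  have ht0 : t ≠ 0 := by rintro rfl; simp at ht
  have h1t : ordv v (t + 1) = ordv v t := ordv_add_eq_of_lt v ht0 (by rwa [ordv_one])
  exact ⟨ordv v γ, by rw [← h1t, add_comm, ← hγ, ordv_pow]⟩

lemma dvd_ordv_of_pow_eq_one_add_inv {q : ℕ} {γ t : K} (hγ : γ ^ q = 1 + t⁻¹)
    (ht : 0 ≤ ordv v t) : (q : ℤ) ∣ ordv v t := by
  rcases ht.eq_or_lt with h0 | hpos
  · rw [← h0]; exact dvd_zero _
  · have := dvd_ordv_of_pow_eq_one_add v hγ (by rw [ordv_inv]; omega)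
    rwa [ordv_inv, dvd_neg] at this

lemma dvd_ordv_of_pow_eq_one_add_add_inv_mul_inv {q : ℕ} {γ u D : K} (hD : D ≠ 0)
    (hD0 : 0 ≤ ordv v D) (hDq : (q : ℤ) ∣ ordv v D)
    (hγ : γ ^ q = 1 + (u + u⁻¹) * D⁻¹) :
    (q : ℤ) ∣ ordv v u := by
  rcases eq_or_ne (ordv v u) 0 with h0 | hu
  · rw [h0]; exact dvd_zero _
  have huu := ordv_add_inv_eq_neg_abs v hu
  have huu0 : u + u⁻¹ ≠ 0 := by
    intro h
    rw [h, ordv_zero, eq_comm, neg_eq_zero, abs_eq_zero] at huu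
    exact hu huu
  have ht : ordv v ((u + u⁻¹) * D⁻¹) = -|ordv v u| - ordv v D := by
    rw [ordv_mul v huu0 (inv_ne_zero hD), huu, ordv_inv, sub_eq_add_neg]
  have hqt := dvd_ordv_of_pow_eq_one_add v hγ (by rw [ht]; have := abs_pos.mpr hu; omega)
  rw [ht] at hqt
  have habs : (q : ℤ) ∣ -|ordv v u| := by simpa using dvd_add hqt hDq
  rwa [dvd_neg, dvd_abs] at habs

end

theorem orders_divisible_by_q_away_from_poles_of_d_and_x_general
    (q : ℕ)
    (K : Type*) [Field K]
    (x d a : K) (hd : d ≠ 0)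
    (F : Type*) [Field F] [NumberField F] [Algebra K F] (α β γ : F)
    (hα : α ^ q = algebraMap K F (1 + d⁻¹))
    (hβ : β ^ q = algebraMap K F (1 + (d * x ^ q + d ^ q)⁻¹))
    (hγ : γ ^ q = algebraMap K F (1 + (a + a⁻¹) * d⁻¹)) :
    ∀ 𝔞 : HeightOneSpectrum (𝓞 F),
      0 ≤ ordv 𝔞 (algebraMap K F d) → 0 ≤ ordv 𝔞 (algebraMap K F x) →
        (q : ℤ) ∣ ordv 𝔞 (algebraMap K F d) ∧
        (q : ℤ) ∣ ordv 𝔞 (algebraMap K F a) ∧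
        (q : ℤ) ∣ ordv 𝔞 (algebraMap K F (d * x ^ q + d ^ q)) := by
  intro 𝔞 hd0 hx0
  simp only [map_add, map_one, map_mul, map_inv₀, map_pow] at hα hβ hγ ⊢
  have hdq := dvd_ordv_of_pow_eq_one_add_inv 𝔞 hα hd0
  refine ⟨hdq, ?_, ?_⟩
  · exact dvd_ordv_of_pow_eq_one_add_add_inv_mul_inv 𝔞 (by simpa) hd0 hdq hγ
  · have hs0 : 0 ≤ ordv 𝔞 (algebraMap K F d * algebraMap K F x ^ q + algebraMap K F d ^ q) :=
      ordv_add_nonneg 𝔞 (ordv_mul_nonneg 𝔞 hd0 (ordv_pow_nonneg 𝔞 hx0 q))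
        (ordv_pow_nonneg 𝔞 hd0 q)
    exact dvd_ordv_of_pow_eq_one_add_inv 𝔞 hβ hs0

/-- Proposition: with `F = K(α, β, γ)` where `α^q = 1 + d⁻¹`,
`β^q = 1 + (dx^q + d^q)⁻¹`, `γ^q = 1 + (a + a⁻¹)d⁻¹`, and with `x, d, a` and the prime `𝔮`
of `K` (dividing `q`) as in the previous proposition, every prime `𝔞` of `F` at which both
`d` and `x` are integral satisfies: `ord_𝔞 d`, `ord_𝔞 a` and `ord_𝔞 (dx^q + d^q)` are all
divisible by `q`. -/
theorem orders_divisible_by_q_away_from_poles_of_d_and_x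
    (q : ℕ) (hq : q.Prime)
    (K : Type*) [Field K] [NumberField K] (hzeta : ∃ ζ : K, IsPrimitiveRoot ζ q)
    (x d a : K) (hx : x ≠ 0) (hd : d ≠ 0) (ha : a ≠ 0) (hdx : d * x ^ q + d ^ q ≠ 0)
    (F : Type*) [Field F] [NumberField F] [Algebra K F] (α β γ : F)
    (hα : α ^ q = algebraMap K F (1 + d⁻¹))
    (hβ : β ^ q = algebraMap K F (1 + (d * x ^ q + d ^ q)⁻¹))
    (hγ : γ ^ q = algebraMap K F (1 + (a + a⁻¹) * d⁻¹))
    (hgen : IntermediateField.adjoin K ({α, β, γ} : Set F) = ⊤)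
    (𝔮 : HeightOneSpectrum (𝓞 K))
    (h1 : (q : 𝓞 K) ∈ 𝔮.asIdeal)
    (h2 : (¬ ∃ y : K, y ^ q = a) ∧ DoesNotSplitInQthRootExt q a 𝔮)
    (h3 : ordv 𝔮 x < 0)
    (h4 : ¬ (q : ℤ) ∣ ordv 𝔮 d)
    (h5 : ordv 𝔮 d ≤ -3 * ordv 𝔮 (q : K))
    (h6 : ordv 𝔮 a = 0)
    (h7 : (q : ℤ) * ordv 𝔮 x < (q - 1 : ℤ) * ordv 𝔮 d) :
    ∀ 𝔞 : HeightOneSpectrum (𝓞 F),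
      0 ≤ ordv 𝔞 (algebraMap K F d) → 0 ≤ ordv 𝔞 (algebraMap K F x) →
        (q : ℤ) ∣ ordv 𝔞 (algebraMap K F d) ∧
        (q : ℤ) ∣ ordv 𝔞 (algebraMap K F a) ∧
        (q : ℤ) ∣ ordv 𝔞 (algebraMap K F (d * x ^ q + d ^ q)) :=
  orders_divisible_by_q_away_from_poles_of_d_and_x_general q K x d a hd F α β γ hα hβ hγ
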